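/- The distance characteristic polynomial of the complete multipartite graph $K_{n_1,\ldots,n_k}$ on $n = n_1+\cdots+n_k$ vertices equals $(\lambda+2)^{n-k}\left[\prod_{i=1}^k(\lambda-n_i+2)-\sum_{i=1}^k n_i\prod_{j\neq i}(\lambda-n_j+2)\right]$. -/

import Mathlib

/-!
With `P` the vertex–part incidence matrix and `J` the all-ones matrix, `D = P Pᵀ + J - 2`.
Since `Pᵀ P = diag(n_i)`, Sylvester's identity gives
`det((λ+2) - P Pᵀ) = (λ+2)^(n-k) ∏ (λ+2-n_i)`. The rank-one term `J` is removed by the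
matrix determinant lemma, because `((λ+2) - P Pᵀ) w = 1` for `w_v = 1/(λ+2-n_i)` (`v` in part `i`).
This evaluates the characteristic polynomial at every `λ ∉ {n_i - 2}`, which determines it.
-/

open Polynomial

/-- The distance matrix of a graph, with real entries. -/
noncomputable def distMatrix {V : Type*} [Fintype V] (G : SimpleGraph V) : Matrix V V ℝ :=
  Matrix.of fun u v => (G.dist u v : ℝ)

open Matrix Finset

theorem Matrix.det_sub_of_mulVec_eq_one {n R : Type*} [Fintype n] [DecidableEq n] [CommRing R]
    {N : Matrix n n R} {w : n → R} (hw : N *ᵥ w = 1) :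
    (N - of fun _ _ => 1).det = N.det * (1 - ∑ i, w i) := by
  have hfactor : N - of (fun _ _ => 1) =
      N * (1 + replicateCol Unit (-w) * replicateRow Unit (fun _ => (1 : R))) := by
    rw [Matrix.mul_add, Matrix.mul_one, ← Matrix.mul_assoc, ← replicateCol_mulVec, mulVec_neg, hw,
      sub_eq_add_neg]
    congr 1
    ext
    simp [mul_apply]
  rw [hfactor, det_mul, det_one_add_replicateCol_mul_replicateRow]
  simp [dotProduct, sub_eq_add_neg]

theorem Finset.prod_mul_one_sub_sum_div {ι K : Type*} [DecidableEq ι] [Field K] {s : Finset ι}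
    {d : ι → K} (hd : ∀ i ∈ s, d i ≠ 0) (a : ι → K) :
    (∏ i ∈ s, d i) * (1 - ∑ i ∈ s, a i / d i) =
      ∏ i ∈ s, d i - ∑ i ∈ s, a i * ∏ j ∈ s.erase i, d j := by
  rw [mul_one_sub, mul_sum]
  congr 1
  refine sum_congr rfl fun i hi => ?_
  rw [← mul_prod_erase s d hi]
  field_simp [hd i hi]

namespace Matrix

section PartIncidence

variable {ι : Type*} (α : ι → Type*) (R : Type*) [DecidableEq ι] [CommRing R]

def partIncidence : Matrix (Σ i, α i) ι R := of fun p i => if p.1 = i then 1 else 0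

variable {α R}

theorem partIncidence_mulVec [Fintype ι] (u : ι → R) :
    partIncidence α R *ᵥ u = fun p => u p.1 := by
  ext p
  simp [partIncidence, mulVec, dotProduct]

theorem transpose_partIncidence_mulVec [Fintype ι] [∀ i, Fintype (α i)] (w : (Σ i, α i) → R) :
    (partIncidence α R)ᵀ *ᵥ w = fun i => ∑ a : α i, w ⟨i, a⟩ := by
  ext i
  rw [mulVec, dotProduct, Fintype.sum_sigma, Fintype.sum_eq_single i fun j hj => by
    simp [partIncidence, hj]]
  simp [partIncidence]

theorem transpose_partIncidence_mulVec_fst [Fintype ι] [∀ i, Fintype (α i)] (u : ι → R) :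
    (partIncidence α R)ᵀ *ᵥ (fun p => u p.1) = fun i => Fintype.card (α i) * u i := by
  simp [transpose_partIncidence_mulVec]

theorem transpose_partIncidence_mul_self [Fintype ι] [∀ i, Fintype (α i)] :
    (partIncidence α R)ᵀ * partIncidence α R = diagonal fun i => (Fintype.card (α i) : R) := by
  ext i j
  rw [mul_apply, Fintype.sum_sigma, Fintype.sum_eq_single i fun k hk => by
    simp [partIncidence, hk]]
  simp [partIncidence, diagonal]

theorem partIncidence_mul_transpose [Fintype ι] :
    partIncidence α R * (partIncidence α R)ᵀ =
      of fun p q : Σ i, α i => if p.1 = q.1 then 1 else 0 := by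
  ext p q
  simp [partIncidence, mul_apply]

theorem charpoly_partIncidence_mul_transpose [Fintype ι] [∀ i, Fintype (α i)]
    [∀ i, DecidableEq (α i)] (h : Fintype.card ι ≤ Fintype.card (Σ i, α i)) :
    (partIncidence α R * (partIncidence α R)ᵀ).charpoly =
      X ^ (Fintype.card (Σ i, α i) - Fintype.card ι) * ∏ i, (X - C (Fintype.card (α i) : R)) := by
  rw [charpoly_mul_comm_of_le _ _ h, transpose_partIncidence_mul_self, charpoly_diagonal]

theorem scalar_sub_partIncidence_mul_transpose_mulVec {K : Type*} [Field K] [Fintype ι]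
    [∀ i, Fintype (α i)] [∀ i, DecidableEq (α i)] {y : K}
    (hy : ∀ i, y - Fintype.card (α i) ≠ 0) :
    (scalar _ y - partIncidence α K * (partIncidence α K)ᵀ) *ᵥ
      (fun p => (y - Fintype.card (α p.1))⁻¹) = 1 := by
  funext p
  rw [sub_mulVec, ← mulVec_mulVec,
    transpose_partIncidence_mulVec_fst fun i => (y - Fintype.card (α i))⁻¹, partIncidence_mulVec]
  simp only [scalar_apply, mulVec_diagonal, Pi.sub_apply, Pi.one_apply]
  field_simp [hy p.1]

end PartIncidence

end Matrix

namespace SimpleGraph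

variable {ι : Type*} {V : ι → Type*} {u v : Σ i, V i}

theorem completeMultipartiteGraph_dist_of_fst_ne (h : u.1 ≠ v.1) :
    (completeMultipartiteGraph V).dist u v = 1 :=
  dist_eq_one_iff_adj.mpr h

theorem completeMultipartiteGraph_dist_of_fst_eq [Nontrivial ι] [∀ i, Nonempty (V i)]
    (hne : u ≠ v) (h : u.1 = v.1) : (completeMultipartiteGraph V).dist u v = 2 := by
  obtain ⟨j, hj⟩ := exists_ne u.1
  have hw : (⟨j, Classical.arbitrary _⟩ : Σ i, V i) ∈
      (completeMultipartiteGraph V).commonNeighbors u v :=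
    ⟨hj.symm, (h ▸ hj.symm : v.1 ≠ j)⟩
  have hnadj : ¬(completeMultipartiteGraph V).Adj u v := fun hadj => (show u.1 ≠ v.1 from hadj) h
  rw [dist, edist_eq_two_iff.mpr ⟨hne, hnadj, _, hw⟩]
  rfl

end SimpleGraph

theorem distMatrix_completeMultipartiteGraph {ι : Type*} {V : ι → Type*} [Fintype ι]
    [DecidableEq ι] [∀ i, Fintype (V i)] [∀ i, DecidableEq (V i)] [Nontrivial ι]
    [∀ i, Nonempty (V i)] :
    distMatrix (SimpleGraph.completeMultipartiteGraph V) =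
      partIncidence V ℝ * (partIncidence V ℝ)ᵀ + of (fun _ _ => 1) - 2 := by
  ext u v
  rw [partIncidence_mul_transpose]
  simp only [distMatrix, of_apply, Matrix.add_apply, Matrix.sub_apply, ofNat_apply]
  by_cases huv : u = v
  · subst huv
    norm_num
  by_cases h : u.1 = v.1
  · norm_num [SimpleGraph.completeMultipartiteGraph_dist_of_fst_eq huv h, h, huv]
  · norm_num [SimpleGraph.completeMultipartiteGraph_dist_of_fst_ne h, h, huv]

theorem distance_charpoly_completeMultipartite (k : ℕ) (hk : 2 ≤ k)
    (c : Fin k → ℕ) (hc : ∀ i, 1 ≤ c i) :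
    (distMatrix (SimpleGraph.completeMultipartiteGraph fun i : Fin k => Fin (c i))).charpoly =
      (X + 2) ^ ((∑ i, c i) - k) *
        (∏ i, (X - C (c i : ℝ) + 2) -
          ∑ i, C (c i : ℝ) * ∏ j ∈ Finset.univ.erase i, (X - C (c j : ℝ) + 2)) := by
  have : Nontrivial (Fin k) := Fin.nontrivial_iff_two_le.mpr hk
  have : ∀ i, Nonempty (Fin (c i)) := fun i => Fin.pos_iff_nonempty.mp (hc i)
  set P := partIncidence (fun i : Fin k => Fin (c i)) ℝ
  have hcard : Fintype.card (Fin k) ≤ Fintype.card (Σ i, Fin (c i)) := by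
    simpa [Fintype.card_sigma] using sum_le_sum (s := univ) fun i _ => hc i
  apply eq_of_infinite_eval_eq
  refine (Set.finite_range fun i => (c i : ℝ) - 2).infinite_compl.mono fun x hx => ?_
  have hd : ∀ i, x + 2 - Fintype.card (Fin (c i)) ≠ 0 := fun i h =>
    hx ⟨i, by simp at h ⊢; linarith⟩
  have hsplit : scalar _ x - distMatrix (SimpleGraph.completeMultipartiteGraph fun i => Fin (c i))
      = scalar _ (x + 2) - P * Pᵀ - of fun _ _ => 1 := by
    rw [distMatrix_completeMultipartiteGraph, map_add, map_ofNat]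
    abel
  rw [Set.mem_ofPred_eq, eval_charpoly, hsplit,
    det_sub_of_mulVec_eq_one (scalar_sub_partIncidence_mul_transpose_mulVec hd), ← eval_charpoly,
    charpoly_partIncidence_mul_transpose hcard, Fintype.sum_sigma]
  simp only [Fintype.card_sigma, Fintype.card_fin, map_natCast, eval_mul, eval_pow, eval_X,
    eval_prod, eval_sub, eval_natCast, sum_const, card_univ, nsmul_eq_mul, eval_add, eval_ofNat,
    eval_finsetSum, sub_add_eq_add_sub, ← div_eq_mul_inv]
  rw [mul_assoc, prod_mul_one_sub_sum_div fun i _ => by simpa using hd i]
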